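/- Let Z be a discrete random variable on a finite probability space and Y : Ω → R^d a bounded random variable with ‖Y‖ ≤ R almost surely, taking finitely many values, and let Y' denote the discrete variable identified with Y. Then E‖Y − E[Y|Z]‖² ≤ 4R² · (1 − exp(−H(Y'|Z))), where H(Y'|Z) is the conditional entropy of the discrete variable Y' given Z. -/

import Mathlib

open Finset Real
open scoped Classical

noncomputable section

/-- Probability of an event on a finite space with pmf `p`. -/
def pr {Ω : Type*} [Fintype Ω] (p : Ω → ℝ) (E : Ω → Prop) : ℝ :=
  ∑ ω, if E ω then p ω else 0

/-- Conditional probability `P(A | B)`. -/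
def cpr {Ω : Type*} [Fintype Ω] (p : Ω → ℝ) (A B : Ω → Prop) : ℝ :=
  pr p (fun ω => A ω ∧ B ω) / pr p B

/-- Shannon entropy (nats) of a random variable `T`. -/
def entH {Ω α : Type*} [Fintype Ω] [Fintype α] (p : Ω → ℝ) (T : Ω → α) : ℝ :=
  -∑ t, pr p (fun ω => T ω = t) * Real.log (pr p (fun ω => T ω = t))

/-- Entropy of the conditional distribution of `T` given `Z = z`. -/
def condEntAt {Ω α β : Type*} [Fintype Ω] [Fintype α] (p : Ω → ℝ) (T : Ω → α)
    (Z : Ω → β) (z : β) : ℝ :=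
  -∑ t, cpr p (fun ω => T ω = t) (fun ω => Z ω = z) *
      Real.log (cpr p (fun ω => T ω = t) (fun ω => Z ω = z))

/-- Conditional Shannon entropy `H(T | Z)`. -/
def condEntH {Ω α β : Type*} [Fintype Ω] [Fintype α] [Fintype β] (p : Ω → ℝ) (T : Ω → α)
    (Z : Ω → β) : ℝ :=
  ∑ z, pr p (fun ω => Z ω = z) * condEntAt p T Z z

/-- Mutual information `I(T; V)` (nats), with the convention `0 log 0 = 0`. -/
def mi {Ω α β : Type*} [Fintype Ω] [Fintype α] [Fintype β] (p : Ω → ℝ) (T : Ω → α)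
    (V : Ω → β) : ℝ :=
  ∑ t, ∑ v,
    pr p (fun ω => T ω = t ∧ V ω = v) *
      Real.log (pr p (fun ω => T ω = t ∧ V ω = v) /
        (pr p (fun ω => T ω = t) * pr p (fun ω => V ω = v)))

/-- Conditional mutual information `I(C; X | V) = H(C|V) - H(C | (X,V))`. -/
def cmi {Ω α β γ : Type*} [Fintype Ω] [Fintype α] [Fintype β] [Fintype γ]
    (p : Ω → ℝ) (C : Ω → α) (X : Ω → β) (V : Ω → γ) : ℝ :=
  condEntH p C V - condEntH p C (fun ω => (X ω, V ω))

/-- Expectation of a real-valued function on a finite probability space. -/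
def ex {Ω : Type*} [Fintype Ω] (p : Ω → ℝ) (f : Ω → ℝ) : ℝ := ∑ ω, p ω * f ω

/-- Conditional mean `E[Y | Z = z]` for an `ℝ^d`-valued random variable. -/
def condMean {Ω β : Type*} [Fintype Ω] {d : ℕ} (p : Ω → ℝ) (Z : Ω → β)
    (Y : Ω → EuclideanSpace ℝ (Fin d)) (z : β) : EuclideanSpace ℝ (Fin d) :=
  (pr p (fun ω => Z ω = z))⁻¹ • ∑ ω, if Z ω = z then p ω • Y ω else 0

section auxlemmas

variable {Ω α β : Type*} [Fintype Ω] [Fintype α] [Fintype β] {d : ℕ}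

lemma pr_nonneg (p : Ω → ℝ) (hp : ∀ ω, 0 ≤ p ω) (E : Ω → Prop) : 0 ≤ pr p E := by
  unfold pr
  exact Finset.sum_nonneg fun ω _ => by by_cases h : E ω <;> simp [h, hp ω]

lemma sum_fiber (p : Ω → ℝ) (Y' : Ω → α) (Z : Ω → β) (z : β) :
    ∑ t, pr p (fun ω => Y' ω = t ∧ Z ω = z) = pr p (fun ω => Z ω = z) := by
  unfold pr
  rw [Finset.sum_comm]
  refine Finset.sum_congr rfl fun ω _ => ?_
  by_cases h : Z ω = z <;> simp [h]

lemma sum_pr_eq_one (p : Ω → ℝ) (hsum : ∑ ω, p ω = 1) (Z : Ω → β) :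
    ∑ z, pr p (fun ω => Z ω = z) = 1 := by
  unfold pr
  rw [Finset.sum_comm, ← hsum]
  exact Finset.sum_congr rfl fun ω _ => by simp

lemma meanMin (p : Ω → ℝ) (hp : ∀ ω, 0 ≤ p ω) (Z : Ω → β)
    (Y : Ω → EuclideanSpace ℝ (Fin d)) (z : β)
    (hW : pr p (fun ω => Z ω = z) ≠ 0) (c : EuclideanSpace ℝ (Fin d)) :
    ∑ ω, (if Z ω = z then p ω else 0) * ‖Y ω - condMean p Z Y z‖ ^ 2 ≤
    ∑ ω, (if Z ω = z then p ω else 0) * ‖Y ω - c‖ ^ 2 := by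
  set q : Ω → ℝ := fun ω => if Z ω = z then p ω else 0 with hq
  have hqnn : ∀ ω, 0 ≤ q ω := fun ω => by by_cases h : Z ω = z <;> simp [hq, h, hp ω]
  set m := condMean p Z Y z with hm
  have hS : ∑ ω, q ω • Y ω = (pr p (fun ω => Z ω = z)) • m := by
    rw [hm]; unfold condMean
    rw [smul_smul, mul_inv_cancel₀ hW, one_smul]
    exact Finset.sum_congr rfl fun ω _ => by by_cases h : Z ω = z <;> simp [hq, h]
  have hQ : ∑ ω, q ω = pr p (fun ω => Z ω = z) := rfl
  have cross : ∑ ω, q ω * (inner ℝ (Y ω - m) (m - c) : ℝ) = 0 := by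
    have h1 : ∑ ω, q ω * (inner ℝ (Y ω - m) (m - c) : ℝ)
        = inner ℝ (∑ ω, q ω • (Y ω - m)) (m - c) := by
      rw [sum_inner]
      exact Finset.sum_congr rfl fun ω _ => (real_inner_smul_left _ _ _).symm
    have h2 : ∑ ω, q ω • (Y ω - m) = 0 := by
      simp only [smul_sub]
      rw [Finset.sum_sub_distrib, hS, ← Finset.sum_smul, hQ, sub_self]
    rw [h1, h2, inner_zero_left]
  have nn : 0 ≤ ∑ ω, q ω * ‖m - c‖ ^ 2 :=
    Finset.sum_nonneg fun ω _ => mul_nonneg (hqnn ω) (sq_nonneg _)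
  have expand : ∑ ω, q ω * ‖Y ω - c‖ ^ 2
      = ∑ ω, q ω * ‖Y ω - m‖ ^ 2 + 2 * (∑ ω, q ω * (inner ℝ (Y ω - m) (m - c) : ℝ))
        + ∑ ω, q ω * ‖m - c‖ ^ 2 := by
    rw [Finset.mul_sum, ← Finset.sum_add_distrib, ← Finset.sum_add_distrib]
    refine Finset.sum_congr rfl fun ω _ => ?_
    have hd : Y ω - c = (Y ω - m) + (m - c) := by abel
    rw [hd, norm_add_sq_real]
    ring
  linarith [expand, cross, nn]

lemma exp_neg_condEntAt_le (p : Ω → ℝ) (hp : ∀ ω, 0 ≤ p ω) (Y' : Ω → α) (Z : Ω → β) (z : β)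
    (hW : 0 < pr p (fun ω => Z ω = z)) (t0 : α)
    (hmax : ∀ t, pr p (fun ω => Y' ω = t ∧ Z ω = z) ≤ pr p (fun ω => Y' ω = t0 ∧ Z ω = z)) :
    Real.exp (-(condEntAt p Y' Z z)) ≤
      pr p (fun ω => Y' ω = t0 ∧ Z ω = z) / pr p (fun ω => Z ω = z) := by
  set W := pr p (fun ω => Z ω = z) with hWdef
  set f : α → ℝ := fun t => pr p (fun ω => Y' ω = t ∧ Z ω = z) with hf
  have hfnn : ∀ t, 0 ≤ f t := fun t => pr_nonneg p hp _
  have hfsum : ∑ t, f t = W := sum_fiber p Y' Z z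
  have hft0 : 0 < f t0 := by
    by_contra h
    push_neg at h
    have hz : ∀ t, f t = 0 := fun t => le_antisymm (le_trans (hmax t) h) (hfnn t)
    have : W = 0 := by rw [← hfsum]; simp [hz]
    linarith
  have hC : condEntAt p Y' Z z = -∑ t, (f t / W) * Real.log (f t / W) := rfl
  have hqmax : 0 < f t0 / W := div_pos hft0 hW
  have sum1 : ∑ t, f t / W = 1 := by rw [← Finset.sum_div, hfsum, div_self hW.ne']
  have hterm : ∀ t, (f t / W) * (-Real.log (f t0 / W)) ≤ -((f t / W) * Real.log (f t / W)) := by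
    intro t
    rcases eq_or_lt_of_le (hfnn t) with h | h
    · simp [← h]
    · have hqt : 0 < f t / W := div_pos h hW
      have hle : Real.log (f t / W) ≤ Real.log (f t0 / W) :=
        Real.log_le_log hqt ((div_le_div_iff_of_pos_right hW).mpr (hmax t))
      nlinarith
  have h1 : ∑ t, (f t / W) * (-Real.log (f t0 / W))
      ≤ ∑ t, -((f t / W) * Real.log (f t / W)) :=
    Finset.sum_le_sum fun t _ => hterm t
  have h2 : ∑ t, (f t / W) * (-Real.log (f t0 / W)) = -Real.log (f t0 / W) := by
    rw [← Finset.sum_mul, sum1, one_mul]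
  have h3 : ∑ t, -((f t / W) * Real.log (f t / W)) = condEntAt p Y' Z z := by
    rw [Finset.sum_neg_distrib, ← hC]
  have : -condEntAt p Y' Z z ≤ Real.log (f t0 / W) := by linarith
  calc Real.exp (-(condEntAt p Y' Z z)) ≤ Real.exp (Real.log (f t0 / W)) :=
        Real.exp_le_exp.mpr this
    _ = f t0 / W := Real.exp_log hqmax

lemma sum_ite_and (p : Ω → ℝ) (A B : Ω → Prop) :
    ∑ ω, (if A ω ∧ B ω then p ω else 0) = pr p (fun ω => A ω ∧ B ω) := by
  unfold pr
  exact Finset.sum_congr rfl fun ω _ => by by_cases h : A ω ∧ B ω <;> simp [h]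

lemma pr_pos_elim (p : Ω → ℝ) (hp : ∀ ω, 0 ≤ p ω) {E : Ω → Prop} (h : pr p E ≠ 0) :
    ∃ ω, E ω ∧ 0 < p ω := by
  unfold pr at h
  obtain ⟨ω, -, hω⟩ := Finset.exists_ne_zero_of_sum_ne_zero h
  by_cases hE : E ω
  · exact ⟨ω, hE, lt_of_le_of_ne (hp ω) (Ne.symm (by simpa [hE] using hω))⟩
  · simp [hE] at hω

end auxlemmas
/-- Imputation error bound: if `Y = val ∘ Y'` takes finitely many values of norm at most
`R`, then `E‖Y - E[Y|Z]‖² ≤ 4R²(1 - exp(-H(Y'|Z)))`. -/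
theorem imputation_error_le {Ω α β : Type*} [Fintype Ω] [Fintype α] [Fintype β] {d : ℕ}
    (p : Ω → ℝ) (hp : ∀ ω, 0 ≤ p ω) (hsum : ∑ ω, p ω = 1)
    (Z : Ω → β) (Y : Ω → EuclideanSpace ℝ (Fin d)) (Y' : Ω → α)
    (val : α → EuclideanSpace ℝ (Fin d)) (hY : ∀ ω, Y ω = val (Y' ω))
    (R : ℝ) (hR : ∀ ω, 0 < p ω → ‖Y ω‖ ≤ R) :
    ex p (fun ω => ‖Y ω - condMean p Z Y (Z ω)‖ ^ 2) ≤
      4 * R ^ 2 * (1 - Real.exp (-(condEntH p Y' Z))) := by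
  set W : β → ℝ := fun z => pr p (fun ω => Z ω = z) with hWdef
  have hWnn : ∀ z, 0 ≤ W z := fun z => pr_nonneg p hp _
  have hWsum : ∑ z, W z = 1 := sum_pr_eq_one p hsum Z
  set H : β → ℝ := fun z => condEntAt p Y' Z z with hHdef
  -- decompose expectation over fibers
  have key : ex p (fun ω => ‖Y ω - condMean p Z Y (Z ω)‖ ^ 2)
      = ∑ z, ∑ ω, (if Z ω = z then p ω else 0) * ‖Y ω - condMean p Z Y z‖ ^ 2 := by
    unfold ex
    rw [Finset.sum_comm]
    refine Finset.sum_congr rfl fun ω _ => ?_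
    simp [ite_mul, Finset.sum_ite_eq]
  -- per-fiber bound
  have hz : ∀ z, ∑ ω, (if Z ω = z then p ω else 0) * ‖Y ω - condMean p Z Y z‖ ^ 2
      ≤ 4 * R ^ 2 * (W z * (1 - Real.exp (-(H z)))) := by
    intro z
    rcases eq_or_lt_of_le (hWnn z) with hW0 | hWpos
    · -- zero-probability fiber
      have hnn : ∀ ω', 0 ≤ (if Z ω' = z then p ω' else 0) :=
        fun ω' => by by_cases h' : Z ω' = z <;> simp [h', hp ω']
      have hq0 : ∀ ω, (if Z ω = z then p ω else 0) = 0 := by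
        intro ω
        have hle : (if Z ω = z then p ω else 0) ≤ ∑ ω', (if Z ω' = z then p ω' else 0) :=
          Finset.single_le_sum (fun ω' _ => hnn ω') (Finset.mem_univ ω)
        have hWz : ∑ ω', (if Z ω' = z then p ω' else 0) = W z := rfl
        exact le_antisymm (by rw [hWz] at hle; linarith) (hnn ω)
      simp [hq0, ← hW0]
    · -- positive-probability fiber: pick the mode t0 of Y' given Z = z
      obtain ⟨ω₁, -, hω₁⟩ := Finset.exists_ne_zero_of_sum_ne_zero
        (show (∑ ω, if Z ω = z then p ω else 0) ≠ 0 from ne_of_gt hWpos)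
      obtain ⟨t0, -, ht0⟩ := Finset.exists_max_image (Finset.univ : Finset α)
        (fun t => pr p (fun ω => Y' ω = t ∧ Z ω = z)) ⟨Y' ω₁, Finset.mem_univ _⟩
      have hmax : ∀ t, pr p (fun ω => Y' ω = t ∧ Z ω = z) ≤
          pr p (fun ω => Y' ω = t0 ∧ Z ω = z) := fun t => ht0 t (Finset.mem_univ t)
      have hft0 : 0 < pr p (fun ω => Y' ω = t0 ∧ Z ω = z) := by
        by_contra h
        push_neg at h
        have hz0 : ∀ t, pr p (fun ω => Y' ω = t ∧ Z ω = z) = 0 :=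
          fun t => le_antisymm (le_trans (hmax t) h) (pr_nonneg p hp _)
        have : W z = 0 := by
          rw [hWdef]
          simp only
          rw [← sum_fiber p Y' Z z]
          simp [hz0]
        linarith
      -- a witness in the mode cell with positive probability
      obtain ⟨ω₀, hcond, hpω₀⟩ := pr_pos_elim p hp (ne_of_gt hft0)
      have hvt0 : ‖val t0‖ ≤ R := by
        rw [← hcond.1, ← hY ω₀]
        exact hR ω₀ hpω₀
      have hR0 : 0 ≤ R := le_trans (norm_nonneg _) (hR ω₀ hpω₀)
      have hexp := exp_neg_condEntAt_le p hp Y' Z z hWpos t0 hmax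
      have h4 : W z * Real.exp (-(H z)) ≤ pr p (fun ω => Y' ω = t0 ∧ Z ω = z) := by
        rw [mul_comm]
        exact (le_div_iff₀ hWpos).mp hexp
      calc ∑ ω, (if Z ω = z then p ω else 0) * ‖Y ω - condMean p Z Y z‖ ^ 2
          ≤ ∑ ω, (if Z ω = z then p ω else 0) * ‖Y ω - val t0‖ ^ 2 :=
            meanMin p hp Z Y z (ne_of_gt hWpos) (val t0)
        _ ≤ ∑ ω, ((if Z ω = z then p ω else 0) -
              (if Y' ω = t0 ∧ Z ω = z then p ω else 0)) * (4 * R ^ 2) := by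
            refine Finset.sum_le_sum fun ω _ => ?_
            by_cases h1 : Z ω = z
            · by_cases h2 : Y' ω = t0
              · simp [h1, h2, hY ω]
              · simp only [h1, if_true, h2, false_and, if_false, sub_zero]
                rcases eq_or_lt_of_le (hp ω) with h3 | h3
                · simp [← h3]
                · have hb : ‖Y ω - val t0‖ ≤ 2 * R := by
                    calc ‖Y ω - val t0‖ ≤ ‖Y ω‖ + ‖val t0‖ := norm_sub_le _ _
                      _ ≤ R + R := add_le_add (hR ω h3) hvt0
                      _ = 2 * R := by ring
                  have hsq : ‖Y ω - val t0‖ ^ 2 ≤ (2 * R) ^ 2 :=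
                    pow_le_pow_left₀ (norm_nonneg _) hb 2
                  nlinarith
            · simp [h1]
        _ = (W z - pr p (fun ω => Y' ω = t0 ∧ Z ω = z)) * (4 * R ^ 2) := by
            rw [← Finset.sum_mul, Finset.sum_sub_distrib,
              sum_ite_and p (fun ω => Y' ω = t0) (fun ω => Z ω = z), hWdef]
            rfl
        _ ≤ (W z - W z * Real.exp (-(H z))) * (4 * R ^ 2) :=
            mul_le_mul_of_nonneg_right (by linarith) (by positivity)
        _ = 4 * R ^ 2 * (W z * (1 - Real.exp (-(H z)))) := by ring
  -- sum over z, then Jensen for exp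
  have jensen : Real.exp (∑ z, W z • (-(H z))) ≤ ∑ z, W z • Real.exp (-(H z)) :=
    convexOn_exp.map_sum_le (fun z _ => hWnn z) hWsum (fun z _ => Set.mem_univ _)
  have hce : condEntH p Y' Z = ∑ z, W z * H z := rfl
  have hsum' : ∑ z, W z • (-(H z)) = -(condEntH p Y' Z) := by
    simp only [smul_eq_mul, mul_neg]
    rw [Finset.sum_neg_distrib, ← hce]
  rw [hsum'] at jensen
  simp only [smul_eq_mul] at jensen
  have expand : ∑ z, 4 * R ^ 2 * (W z * (1 - Real.exp (-(H z))))
      = 4 * R ^ 2 * (1 - ∑ z, W z * Real.exp (-(H z))) := by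
    rw [← Finset.mul_sum]
    congr 1
    have h5 : ∑ z, W z * (1 - Real.exp (-(H z)))
        = ∑ z, W z - ∑ z, W z * Real.exp (-(H z)) := by
      rw [← Finset.sum_sub_distrib]
      exact Finset.sum_congr rfl fun z _ => by ring
    rw [h5, hWsum]
  calc ex p (fun ω => ‖Y ω - condMean p Z Y (Z ω)‖ ^ 2)
      = ∑ z, ∑ ω, (if Z ω = z then p ω else 0) * ‖Y ω - condMean p Z Y z‖ ^ 2 := key
    _ ≤ ∑ z, 4 * R ^ 2 * (W z * (1 - Real.exp (-(H z)))) :=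
        Finset.sum_le_sum fun z _ => hz z
    _ = 4 * R ^ 2 * (1 - ∑ z, W z * Real.exp (-(H z))) := expand
    _ ≤ 4 * R ^ 2 * (1 - Real.exp (-(condEntH p Y' Z))) :=
        mul_le_mul_of_nonneg_left (by linarith) (by positivity)
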